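/- Let $\Sigma \in \mathbb{R}^{d_1\times d_2}$ with singular value decomposition $\Sigma = P\Lambda Q^\top$, where the singular values $\lambda_1 \geq \lambda_2 \geq \cdots$ satisfy $\lambda_r > \lambda_{r+1}$. Consider $\mathcal{L}'(G_1, G_2) = -\operatorname{tr}(G_1 \Sigma G_2^\top) + \frac{\alpha}{4}\|GG^\top - I_r\|_F^2$ where $G = [G_1, G_2] \in \mathbb{R}^{r\times(d_1+d_2)}$ and $\alpha > 0$. Then every global minimizer has the form $G_1 = \frac{1}{\sqrt 2} V(I_r + \frac{1}{\alpha}\Lambda_{[r]})^{1/2}P_{[r]}^\top$ and $G_2 = \frac{1}{\sqrt 2} V(I_r + \frac{1}{\alpha}\Lambda_{[r]})^{1/2}Q_{[r]}^\top$ for some orthogonal $V \in \mathbb{R}^{r\times r}$, where $\Lambda_{[r]} = \mathrm{diag}(\lambda_1,\dots,\lambda_r)$ and $P_{[r]}, Q_{[r]}$ are the corresponding top-$r$ left and right singular vectors. -/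

import Mathlib

open Matrix

/-- Squared Frobenius norm of a real matrix. -/
noncomputable def frobNormSq {m n : Type*} [Fintype m] [Fintype n]
    (A : Matrix m n ℝ) : ℝ := ∑ i, ∑ j, (A i j) ^ 2

/-- The linearized CLIP loss with orthogonality penalty. -/
noncomputable def clipLoss {r d1 d2 : ℕ} (α : ℝ) (S : Matrix (Fin d1) (Fin d2) ℝ)
    (G1 : Matrix (Fin r) (Fin d1) ℝ) (G2 : Matrix (Fin r) (Fin d2) ℝ) : ℝ :=
  -Matrix.trace (G1 * S * G2ᵀ) +
    (α / 4) * frobNormSq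
      (Matrix.fromCols G1 G2 * (Matrix.fromCols G1 G2)ᵀ - 1)

/-!
Completing the square, `clipLoss α S G₁ G₂ = α/4 ‖GᵀG - C‖² + const` for `G = [G₁, G₂]` and
`C = [[1, S/α], [Sᵀ/α, 1]]`. With `S = P Λ Qᵀ`, the matrix `C` is diagonalized by an orthogonal
`O` whose columns pair the singular vectors as `(p_j, ±q_j)/√2`, with eigenvalues `c = 1 ± λ_j/α`
(and `1` on the unpaired coordinates). So `H = G O` minimizes `‖HᵀH - diag c‖²`.

At a minimizer the first variation along `H (HᵀH - diag c)` vanishes, so `K = HᵀH` satisfies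
`K² = K diag c`. Hence `K` commutes with `diag c`, `u_a = K_aa / c_a ∈ [0, 1]`, and `∑ u_a ≤ r`
because `∑ u_a` is the trace of a projection on `ℝʳ`. The residual at `H` is `∑ c² - ∑ c_a² u_a`;
comparing with the matrix keeping the top `r` eigenvalues, the gap `λ_r > λ_{r+1}` forces `u` to be
the indicator of the top `r` coordinates, and then `K = diag(c_1, …, c_r, 0, …)`. Finally any `H`
with this Gram matrix is `V diag(√c_1, …, √c_r) E` for an orthogonal `V`, where `E` selects the
top `r` coordinates; then `G = H Oᵀ` has the stated form.
-/

section Frobenius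

variable {m n : Type*} [Fintype m] [Fintype n]

theorem frobNormSq_eq_trace (A : Matrix m n ℝ) : frobNormSq A = trace (A * Aᵀ) := by
  simp [frobNormSq, trace, mul_apply, sq]

theorem frobNormSq_nonneg (A : Matrix m n ℝ) : 0 ≤ frobNormSq A := by
  unfold frobNormSq; positivity

theorem frobNormSq_eq_zero_iff {A : Matrix m n ℝ} : frobNormSq A = 0 ↔ A = 0 := by
  rw [frobNormSq_eq_trace, ← conjTranspose_eq_transpose_of_trivial,
    trace_mul_conjTranspose_self_eq_zero_iff]

theorem trace_mul_transpose_comm (A B : Matrix m n ℝ) : trace (A * Bᵀ) = trace (B * Aᵀ) := by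
  rw [← trace_transpose, transpose_mul, transpose_transpose]

theorem frobNormSq_add (A B : Matrix m n ℝ) :
    frobNormSq (A + B) = frobNormSq A + 2 * trace (A * Bᵀ) + frobNormSq B := by
  simp only [frobNormSq_eq_trace, transpose_add, Matrix.add_mul, Matrix.mul_add, trace_add,
    trace_mul_transpose_comm B A]
  ring

theorem frobNormSq_neg (A : Matrix m n ℝ) : frobNormSq (-A) = frobNormSq A := by
  simp [frobNormSq]

theorem frobNormSq_sub (A B : Matrix m n ℝ) :
    frobNormSq (A - B) = frobNormSq A - 2 * trace (A * Bᵀ) + frobNormSq B := by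
  rw [sub_eq_add_neg, frobNormSq_add, frobNormSq_neg, transpose_neg, Matrix.mul_neg, trace_neg]
  ring

theorem frobNormSq_smul (s : ℝ) (A : Matrix m n ℝ) : frobNormSq (s • A) = s ^ 2 * frobNormSq A := by
  simp [frobNormSq, mul_pow, Finset.mul_sum]

theorem frobNormSq_transpose_mul_self (A : Matrix m n ℝ) :
    frobNormSq (Aᵀ * A) = frobNormSq (A * Aᵀ) := by
  simp only [frobNormSq_eq_trace, transpose_mul, transpose_transpose]
  rw [Matrix.mul_assoc, trace_mul_comm]
  simp only [Matrix.mul_assoc]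

theorem frobNormSq_transpose_mul_mul [DecidableEq n] {k : Type*} [Fintype k] {O : Matrix n k ℝ}
    (hO : O * Oᵀ = 1) (A : Matrix n n ℝ) : frobNormSq (Oᵀ * A * O) = frobNormSq A := by
  simp only [frobNormSq_eq_trace, transpose_mul, transpose_transpose, Matrix.mul_assoc]
  rw [← Matrix.mul_assoc O, hO, Matrix.one_mul, trace_mul_comm]
  simp only [Matrix.mul_assoc, hO, Matrix.mul_one]

theorem frobNormSq_diagonal [DecidableEq n] (v : n → ℝ) :
    frobNormSq (diagonal v) = ∑ a, v a ^ 2 := by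
  simp [frobNormSq, diagonal_apply, ite_pow]

end Frobenius

theorem eq_zero_of_forall_quartic_nonneg {a b c e : ℝ}
    (h : ∀ t : ℝ, 0 ≤ a * t + b * t ^ 2 + c * t ^ 3 + e * t ^ 4) : a = 0 := by
  have hmin : IsLocalMin (fun t : ℝ => a * t + b * t ^ 2 + c * t ^ 3 + e * t ^ 4) 0 :=
    Filter.Eventually.of_forall fun t => by simpa using h t
  have hderiv : HasDerivAt (fun t : ℝ => a * t + b * t ^ 2 + c * t ^ 3 + e * t ^ 4) a 0 := by
    refine (((((hasDerivAt_id' (0 : ℝ)).const_mul a).add ((hasDerivAt_pow 2 0).const_mul b)).add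
      ((hasDerivAt_pow 3 0).const_mul c)).add ((hasDerivAt_pow 4 0).const_mul e)).congr_deriv ?_
    simp
  exact hmin.hasDerivAt_eq_zero hderiv

theorem mul_transpose_mul_self_eq_of_isMin {m n : Type*} [Fintype m] [Fintype n]
    {D : Matrix n n ℝ} (hD : Dᵀ = D) {H : Matrix m n ℝ}
    (hmin : ∀ H' : Matrix m n ℝ, frobNormSq (Hᵀ * H - D) ≤ frobNormSq (H'ᵀ * H' - D)) :
    H * (Hᵀ * H) = H * D := by
  set A := Hᵀ * H - D with hA
  have hAsymm : Aᵀ = A := by rw [hA, transpose_sub, transpose_mul, transpose_transpose, hD]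
  set W := H * A with hW
  set B := Hᵀ * W + Wᵀ * H
  set E := Wᵀ * W
  have hline : ∀ t : ℝ, (H + t • W)ᵀ * (H + t • W) - D = A + t • B + t ^ 2 • E := by
    intro t
    simp only [hA, B, E, transpose_add, transpose_smul, Matrix.add_mul, Matrix.mul_add,
      Matrix.smul_mul, Matrix.mul_smul]
    module
  have hexpand : ∀ t : ℝ, frobNormSq (A + t • B + t ^ 2 • E) = frobNormSq A
      + 2 * trace (A * Bᵀ) * t + (2 * trace (A * Eᵀ) + frobNormSq B) * t ^ 2
      + 2 * trace (B * Eᵀ) * t ^ 3 + frobNormSq E * t ^ 4 := by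
    intro t
    simp only [add_assoc, frobNormSq_add, frobNormSq_smul, transpose_add, transpose_smul,
      Matrix.mul_add, Matrix.mul_smul, Matrix.smul_mul, trace_add, trace_smul, smul_eq_mul]
    ring
  -- The linear coefficient `2 tr (A Bᵀ) = 4 ‖W‖²` of the loss along `H + t W` must vanish.
  have hlinear : 2 * trace (A * Bᵀ) = 0 := by
    refine eq_zero_of_forall_quartic_nonneg (b := 2 * trace (A * Eᵀ) + frobNormSq B)
      (c := 2 * trace (B * Eᵀ)) (e := frobNormSq E) fun t => ?_
    have := hmin (H + t • W)
    rw [hline, hexpand] at this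
    linarith
  have htrace : trace (A * Bᵀ) = 2 * trace (W * Wᵀ) := by
    have h1 : trace (A * (Hᵀ * W)ᵀ) = trace (W * Wᵀ) := by
      rw [transpose_mul, transpose_transpose, ← Matrix.mul_assoc, trace_mul_comm,
        ← Matrix.mul_assoc, ← hW]
    have h2 : trace (A * (Wᵀ * H)ᵀ) = trace (W * Wᵀ) := by
      rw [transpose_mul, transpose_transpose, ← Matrix.mul_assoc, trace_mul_cycle, ← hAsymm,
        Matrix.mul_assoc, ← transpose_mul, ← hW]
    rw [transpose_add, Matrix.mul_add, trace_add, h1, h2]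
    ring
  have hW0 : W = 0 := by
    rw [← frobNormSq_eq_zero_iff, frobNormSq_eq_trace]
    linarith
  rwa [hW, hA, Matrix.mul_sub, sub_eq_zero] at hW0

theorem eq_ite_mem_of_sum_le_sum_mul {d : Type*} [Fintype d] [DecidableEq d] (T : Finset d)
    {u w : d → ℝ} {μ : ℝ} (hμ : 0 ≤ μ) (hu0 : ∀ a, 0 ≤ u a) (hu1 : ∀ a, u a ≤ 1)
    (hsum : ∑ a, u a ≤ T.card) (hT : ∀ a ∈ T, μ < w a) (hTc : ∀ a ∉ T, w a * u a ≤ μ * u a)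
    (hval : ∑ a ∈ T, w a ≤ ∑ a, w a * u a) (a : d) : u a = if a ∈ T then 1 else 0 := by
  have hrest : ∑ a ∈ Tᶜ, w a * u a ≤ μ * ∑ a ∈ Tᶜ, u a := by
    rw [Finset.mul_sum]
    exact Finset.sum_le_sum fun a ha => hTc a (Finset.mem_compl.mp ha)
  have hsplit_u := Finset.sum_add_sum_compl T u
  have hsplit_wu := Finset.sum_add_sum_compl T fun a => w a * u a
  have hcard : ∑ a ∈ T, (1 : ℝ) = T.card := by simp
  have hterm : ∀ a ∈ T, 0 ≤ (w a - μ) * (1 - u a) := fun a ha =>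
    mul_nonneg (by linarith [hT a ha]) (by linarith [hu1 a])
  have hsum_term : ∑ a ∈ T, (w a - μ) * (1 - u a) ≤ 0 := by
    have hexp : ∑ a ∈ T, (w a - μ) * (1 - u a)
        = ∑ a ∈ T, w a - ∑ a ∈ T, w a * u a - μ * (∑ a ∈ T, (1 : ℝ) - ∑ a ∈ T, u a) := by
      simp only [mul_sub, sub_mul, mul_one, Finset.sum_sub_distrib, Finset.mul_sum]
      ring
    rw [hexp, hcard]
    nlinarith [mul_le_mul_of_nonneg_left hsum hμ]
  have hone : ∀ a ∈ T, u a = 1 := fun a ha => by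
    have h := (Finset.sum_eq_zero_iff_of_nonneg hterm).mp (le_antisymm hsum_term
      (Finset.sum_nonneg hterm)) a ha
    rcases mul_eq_zero.mp h with h | h
    · linarith [hT a ha]
    · linarith
  have hzero : ∀ a ∉ T, u a = 0 := fun a ha => by
    have hT_mass : ∑ a ∈ T, u a = T.card := by rw [Finset.sum_congr rfl hone, hcard]
    exact (Finset.sum_eq_zero_iff_of_nonneg fun a _ => hu0 a).mp
      (le_antisymm (by linarith) (Finset.sum_nonneg fun a _ => hu0 a)) a (Finset.mem_compl.mpr ha)
  split_ifs with ha
  exacts [hone a ha, hzero a ha]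

namespace Matrix

section FixedPoint

variable {d : Type*} [Fintype d] [DecidableEq d] {K : Matrix d d ℝ} {c : d → ℝ}

theorem sum_sq_apply_eq_of_mul_self_eq (hK : Kᵀ = K) (hKc : K * K = K * diagonal c) (a : d) :
    ∑ e, K a e ^ 2 = K a a * c a := by
  have h := congrFun (congrFun hKc a) a
  rw [mul_diagonal, mul_apply] at h
  rw [← h]
  refine Finset.sum_congr rfl fun e _ => ?_
  rw [sq, ← transpose_apply K e a, hK]

theorem apply_eq_zero_of_diag_eq_zero_of_mul_self_eq (hK : Kᵀ = K)
    (hKc : K * K = K * diagonal c) {a : d} (ha : K a a = 0) (b : d) : K a b = 0 := by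
  have h := sum_sq_apply_eq_of_mul_self_eq hK hKc a
  rw [ha, zero_mul, Finset.sum_eq_zero_iff_of_nonneg fun e _ => sq_nonneg _] at h
  exact pow_eq_zero_iff two_ne_zero |>.mp (h b (Finset.mem_univ b))

theorem diag_sq_le_of_mul_self_eq (hK : Kᵀ = K) (hKc : K * K = K * diagonal c) (a : d) :
    K a a ^ 2 ≤ K a a * c a :=
  sum_sq_apply_eq_of_mul_self_eq hK hKc a ▸
    Finset.single_le_sum (fun e _ => sq_nonneg (K a e)) (Finset.mem_univ a)

theorem diagonal_mul_comm_of_mul_self_eq (hK : Kᵀ = K) (hKc : K * K = K * diagonal c) :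
    diagonal c * K = K * diagonal c := by
  have h := congrArg transpose hKc
  rwa [transpose_mul, transpose_mul, hK, diagonal_transpose, hKc, eq_comm] at h

theorem apply_eq_zero_of_ne_of_mul_self_eq (hK : Kᵀ = K) (hKc : K * K = K * diagonal c)
    {a b : d} (hab : c a ≠ c b) : K a b = 0 := by
  have h := congrFun (congrFun (diagonal_mul_comm_of_mul_self_eq hK hKc) a) b
  rw [diagonal_mul, mul_diagonal] at h
  exact (mul_eq_zero.mp (by linarith : (c a - c b) * K a b = 0)).resolve_left (sub_ne_zero.mpr hab)

/-- Uses `0⁻¹ = 0`: the rows of `K` where `c` vanishes are zero. -/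
theorem mul_diagonal_inv_mul_of_mul_self_eq (hK : Kᵀ = K) (hKc : K * K = K * diagonal c) :
    K * diagonal c⁻¹ * K = K := by
  ext a b
  have hcomm : ∀ e, K a e * c e = c a * K a e := fun e => by
    simpa [diagonal_mul, mul_diagonal, eq_comm] using
      congrFun (congrFun (diagonal_mul_comm_of_mul_self_eq hK hKc) a) e
  have hcomm_inv : ∀ e, K a e * (c e)⁻¹ = (c a)⁻¹ * K a e := fun e => by
    rcases eq_or_ne (c a) (c e) with h | h
    · rw [h, mul_comm]
    · simp [apply_eq_zero_of_ne_of_mul_self_eq hK hKc h]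
  calc (K * diagonal c⁻¹ * K) a b = ∑ e, (c a)⁻¹ * (K a e * K e b) := by
        simp only [mul_apply (M := K * _), mul_diagonal, Pi.inv_apply, hcomm_inv, mul_assoc]
    _ = (c a)⁻¹ * c a * K a b := by
        rw [← Finset.mul_sum, ← mul_apply, hKc, mul_diagonal, hcomm, mul_assoc]
    _ = K a b := by
        rcases eq_or_ne (c a) 0 with h | h
        · have haa : K a a = 0 := by nlinarith [diag_sq_le_of_mul_self_eq hK hKc a]
          simp [apply_eq_zero_of_diag_eq_zero_of_mul_self_eq hK hKc haa b]
        · rw [inv_mul_cancel₀ h, one_mul]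

theorem eq_diagonal_of_mul_self_eq (hK : Kᵀ = K) (hKc : K * K = K * diagonal c)
    (hdiag : ∀ a, K a a = 0 ∨ K a a = c a) : K = diagonal fun a => K a a := by
  ext a b
  rcases eq_or_ne a b with rfl | hab
  · simp
  rw [diagonal_apply_ne _ hab]
  have hsq : K a a ^ 2 + K a b ^ 2 ≤ K a a ^ 2 := by
    calc K a a ^ 2 + K a b ^ 2 ≤ ∑ e, K a e ^ 2 := by
          rw [← Finset.sum_pair hab (f := fun e => K a e ^ 2)]
          exact Finset.sum_le_sum_of_subset_of_nonneg (Finset.subset_univ _)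
            fun e _ _ => sq_nonneg _
      _ = K a a ^ 2 := by
          rw [sum_sq_apply_eq_of_mul_self_eq hK hKc]
          rcases hdiag a with h | h <;> rw [h] <;> ring
  nlinarith [sq_nonneg (K a b)]

theorem frobNormSq_sub_diagonal_of_mul_self_eq (hK : Kᵀ = K) (hKc : K * K = K * diagonal c) :
    frobNormSq (K - diagonal c) = ∑ a, c a ^ 2 - ∑ a, c a * K a a := by
  rw [frobNormSq_sub, frobNormSq_eq_trace K, hK, hKc, diagonal_transpose, frobNormSq_diagonal]
  simp only [trace, diag_apply, mul_diagonal, mul_comm (K _ _)]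
  ring

end FixedPoint

theorem trace_le_card_of_isIdempotentElem {m : Type*} [Fintype m] [DecidableEq m]
    {Z : Matrix m m ℝ} (hZ : Zᵀ = Z) (hZZ : IsIdempotentElem Z) : trace Z ≤ Fintype.card m := by
  have h := frobNormSq_nonneg (1 - Z)
  have hidem : (1 - Z) * (1 - Z) = 1 - Z := by
    rw [Matrix.sub_mul, Matrix.mul_sub, Matrix.mul_sub, hZZ.eq]; simp
  rw [frobNormSq_eq_trace, transpose_sub, transpose_one, hZ, hidem, trace_sub, trace_one] at h
  linarith

theorem sum_diag_div_le_card {m d : Type*} [Fintype m] [DecidableEq m] [Fintype d]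
    [DecidableEq d] {H : Matrix m d ℝ} {c : d → ℝ}
    (hKc : Hᵀ * H * (Hᵀ * H) = Hᵀ * H * diagonal c) :
    ∑ a, (Hᵀ * H) a a / c a ≤ Fintype.card m := by
  set K := Hᵀ * H with hKdef
  set E : Matrix d d ℝ := diagonal c⁻¹
  have hK : Kᵀ = K := by simp [K]
  have hKEK : ∀ X : Matrix d m ℝ, K * (E * (K * X)) = K * X := fun X => by
    rw [← Matrix.mul_assoc, ← Matrix.mul_assoc, mul_diagonal_inv_mul_of_mul_self_eq hK hKc]
  have hHH : ∀ X : Matrix d m ℝ, Hᵀ * (H * X) = K * X := fun X => by rw [← Matrix.mul_assoc]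
  -- `H E K E Hᵀ` is an orthogonal projection with trace `tr (E K)`
  have hZ : (H * E * K * E * Hᵀ)ᵀ = H * E * K * E * Hᵀ := by
    simp [E, hK, Matrix.mul_assoc]
  have hZZ : IsIdempotentElem (H * E * K * E * Hᵀ) := by
    simp only [IsIdempotentElem, Matrix.mul_assoc, hHH, hKEK]
  have htrace : trace (H * E * K * E * Hᵀ) = ∑ a, K a a / c a := by
    rw [trace_mul_comm]
    simp only [← Matrix.mul_assoc, ← hKdef]
    rw [mul_diagonal_inv_mul_of_mul_self_eq hK hKc]
    simp [E, trace, mul_diagonal, div_eq_mul_inv]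
  exact htrace ▸ trace_le_card_of_isIdempotentElem hZ hZZ

section Selection

variable {m d : Type*} [Fintype m] [DecidableEq m] [DecidableEq d]

theorem diagonal_mul_submatrix_one_mul_transpose [Fintype d] (t : m ↪ d) (s : m → ℝ) :
    diagonal s * (1 : Matrix d d ℝ).submatrix t id *
      (diagonal s * (1 : Matrix d d ℝ).submatrix t id)ᵀ = diagonal (s ^ 2) := by
  rw [transpose_mul, diagonal_transpose, Matrix.mul_assoc, ← Matrix.mul_assoc _ _ (diagonal s)]
  rw [show (1 : Matrix d d ℝ).submatrix t id * ((1 : Matrix d d ℝ).submatrix t id)ᵀ = 1 by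
    rw [transpose_submatrix, transpose_one, ← submatrix_mul _ _ _ _ _ Function.bijective_id,
      Matrix.mul_one, submatrix_one_embedding]]
  simp [sq]

theorem transpose_diagonal_mul_submatrix_one_mul (t : m ↪ d) {s : m → ℝ} {c : d → ℝ}
    (hs : ∀ i, s i ^ 2 = c (t i)) :
    (diagonal s * (1 : Matrix d d ℝ).submatrix t id)ᵀ *
      (diagonal s * (1 : Matrix d d ℝ).submatrix t id)
      = diagonal fun a => if a ∈ Finset.univ.map t then c a else 0 := by
  have hB : diagonal s * (1 : Matrix d d ℝ).submatrix t id =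
      of fun i a => if t i = a then s i else 0 := by
    ext i a; simp [diagonal_mul, one_apply]
  ext a b
  simp only [hB, mul_apply, transpose_apply, of_apply]
  by_cases ha : a ∈ Finset.univ.map t
  · obtain ⟨i, -, rfl⟩ := Finset.mem_map.mp ha
    rw [Finset.sum_eq_single i (fun j _ hj => by simp [t.injective.ne hj]) (by simp)]
    by_cases hb : t i = b
    · subst hb; simp [← hs, sq]
    · simp [hb]
  · rw [diagonal_apply, if_neg ha, ite_self]
    refine Finset.sum_eq_zero fun i _ => ?_
    have hi : t i ≠ a := fun h => ha (h ▸ Finset.mem_map_of_mem t (Finset.mem_univ i))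
    simp [hi]

end Selection

theorem sum_sq_le_sum_mul_diag_of_isMin {m d : Type*} [Fintype m] [DecidableEq m]
    [Fintype d] [DecidableEq d] {c : d → ℝ} (t : m ↪ d) (htop : ∀ i, 0 ≤ c (t i))
    {H : Matrix m d ℝ}
    (hmin : ∀ H' : Matrix m d ℝ,
      frobNormSq (Hᵀ * H - diagonal c) ≤ frobNormSq (H'ᵀ * H' - diagonal c)) :
    ∑ a ∈ Finset.univ.map t, c a ^ 2 ≤ ∑ a, c a * (Hᵀ * H) a a := by
  set T := Finset.univ.map t
  have hKc : Hᵀ * H * (Hᵀ * H) = Hᵀ * H * diagonal c := by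
    rw [Matrix.mul_assoc, mul_transpose_mul_self_eq_of_isMin (diagonal_transpose c) hmin,
      Matrix.mul_assoc]
  have hcand := hmin (diagonal (fun i => √(c (t i))) * (1 : Matrix d d ℝ).submatrix t id)
  rw [transpose_diagonal_mul_submatrix_one_mul t fun i => Real.sq_sqrt (htop i),
    frobNormSq_sub_diagonal_of_mul_self_eq (by simp) hKc, diagonal_sub, frobNormSq_diagonal,
    ← Finset.sum_add_sum_compl T] at hcand
  have hrest : ∑ a, ((if a ∈ T then c a else 0) - c a) ^ 2 = ∑ a ∈ Tᶜ, c a ^ 2 := by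
    rw [← Finset.sum_add_sum_compl T, Finset.sum_eq_zero fun a ha => by simp [ha], zero_add]
    exact Finset.sum_congr rfl fun a ha => by simp [Finset.mem_compl.mp ha]
  linarith

theorem transpose_mul_self_eq_of_isMin {m d : Type*} [Fintype m] [DecidableEq m]
    [Fintype d] [DecidableEq d] {c : d → ℝ} (t : m ↪ d) {μ : ℝ} (hμ : 0 ≤ μ)
    (htop : ∀ i, μ < c (t i)) (hrest : ∀ a ∉ Finset.univ.map t, c a ≤ μ) {H : Matrix m d ℝ}
    (hmin : ∀ H' : Matrix m d ℝ,
      frobNormSq (Hᵀ * H - diagonal c) ≤ frobNormSq (H'ᵀ * H' - diagonal c)) :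
    Hᵀ * H = diagonal fun a => if a ∈ Finset.univ.map t then c a else 0 := by
  set T := Finset.univ.map t
  have hval := sum_sq_le_sum_mul_diag_of_isMin t (fun i => hμ.trans (htop i).le) hmin
  set K := Hᵀ * H with hKdef
  have hK : Kᵀ = K := by simp [K]
  have hKc : K * K = K * diagonal c := by
    rw [hKdef, Matrix.mul_assoc, mul_transpose_mul_self_eq_of_isMin (diagonal_transpose c) hmin,
      Matrix.mul_assoc]
  have hK0 : ∀ a, 0 ≤ K a a := fun a => by
    simpa [K, mul_apply] using Finset.sum_nonneg fun i _ => mul_self_nonneg (H i a)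
  have hdiag : ∀ a, K a a = 0 ∨ (0 < c a ∧ K a a ≤ c a) := fun a => by
    have h := diag_sq_le_of_mul_self_eq hK hKc a
    rcases (hK0 a).eq_or_lt with h0 | h0
    · exact Or.inl h0.symm
    · exact Or.inr ⟨by nlinarith, by nlinarith⟩
  set u : d → ℝ := fun a => K a a / c a
  have hKu : ∀ a, K a a = c a * u a := fun a => by
    rcases hdiag a with h | ⟨h, -⟩
    · simp [u, h]
    · exact (mul_div_cancel₀ _ h.ne').symm
  have hu0 : ∀ a, 0 ≤ u a := fun a => by
    rcases hdiag a with h | ⟨h, -⟩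
    · simp [u, h]
    · exact div_nonneg (hK0 a) h.le
  have hu1 : ∀ a, u a ≤ 1 := fun a => by
    rcases hdiag a with h | ⟨h, h'⟩
    · simp [u, h]
    · exact (div_le_one₀ h).mpr h'
  have hsum : ∑ a, u a ≤ T.card := by
    simpa [T] using sum_diag_div_le_card hKc
  have hu := eq_ite_mem_of_sum_le_sum_mul T (w := fun a => c a ^ 2) (sq_nonneg μ) hu0 hu1 hsum
    (fun a ha => by
      obtain ⟨i, -, rfl⟩ := Finset.mem_map.mp ha
      nlinarith [htop i])
    (fun a ha => by
      rcases hdiag a with h | ⟨h, -⟩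
      · simp [u, h]
      · exact mul_le_mul_of_nonneg_right (pow_le_pow_left₀ h.le (hrest a ha) 2) (hu0 a))
    (by simpa [hKu, ← mul_assoc, sq, T] using hval)
  have hKdiag : ∀ a, K a a = if a ∈ T then c a else 0 := fun a => by
    rw [hKu, hu]; split_ifs <;> simp
  rw [eq_diagonal_of_mul_self_eq hK hKc fun a => by rw [hKdiag]; split_ifs <;> simp]
  simp only [hKdiag]

theorem transpose_mul_self_mul_eq {m n k : Type*} [Fintype m] [Fintype n]
    {H B : Matrix m n ℝ} (h : Hᵀ * H = Bᵀ * B) (X : Matrix n k ℝ) :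
    (H * X)ᵀ * (H * X) = (B * X)ᵀ * (B * X) := by
  simp only [transpose_mul, Matrix.mul_assoc]
  rw [← Matrix.mul_assoc Hᵀ, h, Matrix.mul_assoc]

theorem exists_orthogonal_eq_mul_of_transpose_mul_self_eq {m n : Type*} [Fintype m]
    [DecidableEq m] [Fintype n] [DecidableEq n] {H B : Matrix m n ℝ} (hB : IsUnit (B * Bᵀ).det)
    (h : Hᵀ * H = Bᵀ * B) : ∃ V : Matrix m m ℝ, Vᵀ * V = 1 ∧ H = V * B := by
  set B' := Bᵀ * (B * Bᵀ)⁻¹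
  have hBB' : B * B' = 1 := by rw [← Matrix.mul_assoc, mul_nonsing_inv _ hB]
  refine ⟨H * B', by rw [transpose_mul_self_mul_eq h, hBB', transpose_one, Matrix.mul_one], ?_⟩
  have hker : B * (1 - B' * B) = 0 := by
    rw [Matrix.mul_sub, Matrix.mul_one, ← Matrix.mul_assoc, hBB', Matrix.one_mul, sub_self]
  have hN : (H * (1 - B' * B))ᵀ * (H * (1 - B' * B)) = 0 := by
    rw [transpose_mul_self_mul_eq h, hker, transpose_zero, Matrix.zero_mul]
  rw [← conjTranspose_eq_transpose_of_trivial, conjTranspose_mul_self_eq_zero, Matrix.mul_sub,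
    Matrix.mul_one, sub_eq_zero] at hN
  rw [Matrix.mul_assoc, ← hN]

theorem exists_orthogonal_eq_of_transpose_mul_self_eq_diagonal {m d : Type*} [Fintype m]
    [DecidableEq m] [Fintype d] [DecidableEq d] {c : d → ℝ} (t : m ↪ d)
    (hc : ∀ i, 0 < c (t i)) {H : Matrix m d ℝ}
    (hH : Hᵀ * H = diagonal fun a => if a ∈ Finset.univ.map t then c a else 0) :
    ∃ V : Matrix m m ℝ, Vᵀ * V = 1 ∧
      H = V * diagonal (fun i => √(c (t i))) * (1 : Matrix d d ℝ).submatrix t id := by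
  rw [← transpose_diagonal_mul_submatrix_one_mul t fun i => Real.sq_sqrt (hc i).le] at hH
  obtain ⟨V, hV, rfl⟩ := exists_orthogonal_eq_mul_of_transpose_mul_self_eq (by
    rw [diagonal_mul_submatrix_one_mul_transpose, det_diagonal, isUnit_iff_ne_zero]
    exact Finset.prod_ne_zero_iff.mpr fun i _ => pow_ne_zero 2 (Real.sqrt_pos.mpr (hc i)).ne') hH
  exact ⟨V, hV, (Matrix.mul_assoc _ _ _).symm⟩

theorem frobNormSq_mul_le_of_orthogonal {m n : Type*} [Fintype m] [Fintype n]
    [DecidableEq n] {C D O : Matrix n n ℝ} (hO : Oᵀ * O = 1) (hCO : C * O = O * D)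
    {G : Matrix m n ℝ}
    (hmin : ∀ G' : Matrix m n ℝ, frobNormSq (Gᵀ * G - C) ≤ frobNormSq (G'ᵀ * G' - C))
    (H' : Matrix m n ℝ) :
    frobNormSq ((G * O)ᵀ * (G * O) - D) ≤ frobNormSq (H'ᵀ * H' - D) := by
  have hO' : O * Oᵀ = 1 := mul_eq_one_comm.mp hO
  have hconj : ∀ G' : Matrix m n ℝ,
      frobNormSq ((G' * O)ᵀ * (G' * O) - D) = frobNormSq (G'ᵀ * G' - C) := fun G' => by
    rw [← frobNormSq_transpose_mul_mul hO' (G'ᵀ * G' - C)]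
    congr 1
    rw [Matrix.mul_sub, Matrix.sub_mul, Matrix.mul_assoc Oᵀ C, hCO, ← Matrix.mul_assoc Oᵀ O D, hO,
      Matrix.one_mul, transpose_mul]
    simp only [Matrix.mul_assoc]
  have hH' : H' = H' * Oᵀ * O := by rw [Matrix.mul_assoc, hO, Matrix.mul_one]
  rw [hconj, hH', hconj]
  exact hmin _

end Matrix

noncomputable def clipTarget {n₁ n₂ : Type*} [DecidableEq n₁] [DecidableEq n₂] (α : ℝ)
    (S : Matrix n₁ n₂ ℝ) : Matrix (n₁ ⊕ n₂) (n₁ ⊕ n₂) ℝ :=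
  fromBlocks 1 (α⁻¹ • S) (α⁻¹ • Sᵀ) 1

theorem clipLoss_eq {r d1 d2 : ℕ} {α : ℝ} (hα : α ≠ 0) (S : Matrix (Fin d1) (Fin d2) ℝ)
    (G1 : Matrix (Fin r) (Fin d1) ℝ) (G2 : Matrix (Fin r) (Fin d2) ℝ) :
    clipLoss α S G1 G2 = α / 4 * frobNormSq ((fromCols G1 G2)ᵀ * fromCols G1 G2 - clipTarget α S)
      + α / 4 * (r - frobNormSq (clipTarget α S)) := by
  rw [clipLoss]
  set G := fromCols G1 G2
  have hGG : G * Gᵀ = G1 * G1ᵀ + G2 * G2ᵀ := by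
    rw [transpose_fromCols, fromCols_mul_fromRows]
  have hcross : trace (Gᵀ * G * (clipTarget α S)ᵀ)
      = trace (G * Gᵀ) + 2 * α⁻¹ * trace (G1 * S * G2ᵀ) := by
    have hsymm : (clipTarget α S)ᵀ = clipTarget α S := by
      simp [clipTarget, fromBlocks_transpose]
    have hswap : trace (G2 * Sᵀ * G1ᵀ) = trace (G1 * S * G2ᵀ) := by
      rw [← trace_transpose]; simp [Matrix.mul_assoc]
    rw [hsymm, hGG, ← trace_mul_cycle, clipTarget, fromCols_mul_fromBlocks, transpose_fromCols,
      fromCols_mul_fromRows]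
    simp only [Matrix.mul_one, Matrix.mul_smul, Matrix.smul_mul, Matrix.add_mul, trace_add,
      trace_smul, hswap, smul_eq_mul]
    ring
  rw [frobNormSq_sub (Gᵀ * G), frobNormSq_transpose_mul_self, hcross, frobNormSq_sub, transpose_one,
    Matrix.mul_one, frobNormSq_eq_trace 1]
  simp only [transpose_one, Matrix.mul_one, trace_one, Fintype.card_fin]
  field_simp
  ring

theorem frobNormSq_le_of_clipLoss_le {r d1 d2 : ℕ} {α : ℝ} (hα : 0 < α)
    {S : Matrix (Fin d1) (Fin d2) ℝ} {G1 : Matrix (Fin r) (Fin d1) ℝ}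
    {G2 : Matrix (Fin r) (Fin d2) ℝ}
    (hmin : ∀ (G1' : Matrix (Fin r) (Fin d1) ℝ) (G2' : Matrix (Fin r) (Fin d2) ℝ),
      clipLoss α S G1 G2 ≤ clipLoss α S G1' G2')
    (G' : Matrix (Fin r) (Fin d1 ⊕ Fin d2) ℝ) :
    frobNormSq ((fromCols G1 G2)ᵀ * fromCols G1 G2 - clipTarget α S)
      ≤ frobNormSq (G'ᵀ * G' - clipTarget α S) := by
  have h := hmin (toCols₁ G') (toCols₂ G')
  rw [clipLoss_eq hα.ne', clipLoss_eq hα.ne', fromCols_toCols] at h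
  nlinarith

theorem Fin.sum_ite_val_eq {M : Type*} [AddCommMonoid M] {n : ℕ} (k : ℕ) (f : Fin n → M) :
    ∑ y : Fin n, (if (y : ℕ) = k then f y else 0) = if h : k < n then f ⟨k, h⟩ else 0 := by
  split_ifs with h
  · rw [Finset.sum_eq_single ⟨k, h⟩] <;> simp +contextual [Fin.ext_iff]
  · exact Finset.sum_eq_zero fun y _ => if_neg fun hy : (y : ℕ) = k => h (hy ▸ y.isLt)

/-- Its columns are `(e_j + f_j)/√2` and `(e_j - f_j)/√2` for `j < min d1 d2`, and the remaining
`e_j`, `f_j`, where `e`, `f` are the standard bases of the two blocks. -/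
noncomputable def butterfly (d1 d2 : ℕ) : Matrix (Fin d1 ⊕ Fin d2) (Fin d1 ⊕ Fin d2) ℝ :=
  fromBlocks
    (of fun x j : Fin d1 => if x = j then (if (j : ℕ) < d2 then (√2)⁻¹ else 1) else 0)
    (of fun (x : Fin d1) (j : Fin d2) => if (x : ℕ) = j then (√2)⁻¹ else 0)
    (of fun (y : Fin d2) (j : Fin d1) => if (y : ℕ) = j then (√2)⁻¹ else 0)
    (of fun y j : Fin d2 => if y = j then (if (j : ℕ) < d1 then -(√2)⁻¹ else 1) else 0)

noncomputable def clipEigenvalues (d1 d2 : ℕ) (α : ℝ) (lam : ℕ → ℝ) : Fin d1 ⊕ Fin d2 → ℝ :=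
  Sum.elim (fun j => if (j : ℕ) < d2 then 1 + lam j / α else 1)
    (fun j => if (j : ℕ) < d1 then 1 - lam j / α else 1)

theorem butterfly_transpose_mul_self (d1 d2 : ℕ) : (butterfly d1 d2)ᵀ * butterfly d1 d2 = 1 := by
  have hs : (√2)⁻¹ * (√2)⁻¹ = (2 : ℝ)⁻¹ := by rw [← mul_inv, Real.mul_self_sqrt zero_le_two]
  ext (x | y) (j | j) <;>
  simp only [butterfly, Fin.ext_iff, mul_apply, transpose_apply, Fintype.sum_sum_type,
    fromBlocks_apply₁₁, fromBlocks_apply₁₂, fromBlocks_apply₂₁, fromBlocks_apply₂₂, of_apply,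
    mul_ite, ite_mul, hs, one_mul, zero_mul, mul_one, mul_zero, mul_neg, neg_mul,
    Fin.sum_ite_val_eq, Fin.is_lt, ↓reduceDIte, ↓reduceIte, one_apply, Sum.inl.injEq,
    Sum.inr.injEq, reduceCtorEq] <;>
  split_ifs <;> first | omega | norm_num

theorem clipTarget_mul_butterfly (d1 d2 : ℕ) (α : ℝ) (lam : ℕ → ℝ) :
    clipTarget α (of fun (i : Fin d1) (j : Fin d2) => if (i : ℕ) = j then lam i else 0) *
      butterfly d1 d2 = butterfly d1 d2 * diagonal (clipEigenvalues d1 d2 α lam) := by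
  ext (x | y) (j | j) <;>
  simp only [mul_diagonal] <;>
  simp only [clipTarget, smul_of, butterfly, clipEigenvalues, Fin.ext_iff, mul_apply,
    transpose_apply, Fintype.sum_sum_type, fromBlocks_apply₁₁, fromBlocks_apply₁₂,
    fromBlocks_apply₂₁, fromBlocks_apply₂₂, of_apply, Matrix.smul_apply, Pi.smul_apply,
    smul_eq_mul, mul_ite, ite_mul, one_mul, zero_mul, mul_one, mul_zero, mul_neg, neg_mul,
    Fin.sum_ite_val_eq, Fin.is_lt, ↓reduceDIte, dite_eq_ite, one_apply, Sum.elim_inl,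
    Sum.elim_inr] <;>
  split_ifs with h₁ h₂ <;> first | omega | ring1 | (rw [h₂]; ring)

theorem clipTarget_mul_mul_transpose {n₁ n₂ : Type*} [Fintype n₁] [DecidableEq n₁] [Fintype n₂]
    [DecidableEq n₂] (α : ℝ) {P : Matrix n₁ n₁ ℝ} {Q : Matrix n₂ n₂ ℝ} (hP : P * Pᵀ = 1)
    (hQ : Q * Qᵀ = 1) (L : Matrix n₁ n₂ ℝ) :
    clipTarget α (P * L * Qᵀ) = fromBlocks P 0 0 Q * clipTarget α L * (fromBlocks P 0 0 Q)ᵀ := by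
  simp [clipTarget, fromBlocks_transpose, fromBlocks_multiply, hP, hQ, Matrix.mul_assoc]

theorem transpose_mul_self_fromBlocks {n₁ n₂ : Type*} [Fintype n₁] [DecidableEq n₁] [Fintype n₂]
    [DecidableEq n₂] {P : Matrix n₁ n₁ ℝ} {Q : Matrix n₂ n₂ ℝ} (hP : Pᵀ * P = 1) (hQ : Qᵀ * Q = 1) :
    (fromBlocks P 0 0 Q)ᵀ * fromBlocks P 0 0 Q = 1 := by
  simp [fromBlocks_transpose, fromBlocks_multiply, hP, hQ]

theorem transpose_mul_self_fromBlocks_mul_butterfly {d1 d2 : ℕ} {P : Matrix (Fin d1) (Fin d1) ℝ}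
    {Q : Matrix (Fin d2) (Fin d2) ℝ} (hP : Pᵀ * P = 1) (hQ : Qᵀ * Q = 1) :
    (fromBlocks P 0 0 Q * butterfly d1 d2)ᵀ * (fromBlocks P 0 0 Q * butterfly d1 d2) = 1 := by
  rw [transpose_mul, Matrix.mul_assoc, ← Matrix.mul_assoc (fromBlocks P 0 0 Q)ᵀ,
    transpose_mul_self_fromBlocks hP hQ, Matrix.one_mul, butterfly_transpose_mul_self]

theorem clipTarget_mul_fromBlocks_mul_butterfly {d1 d2 : ℕ} (α : ℝ) (lam : ℕ → ℝ)
    {P : Matrix (Fin d1) (Fin d1) ℝ} {Q : Matrix (Fin d2) (Fin d2) ℝ} (hP : Pᵀ * P = 1)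
    (hQ : Qᵀ * Q = 1) :
    clipTarget α (P * (of fun (i : Fin d1) (j : Fin d2) => if (i : ℕ) = j then lam i else 0) * Qᵀ) *
        (fromBlocks P 0 0 Q * butterfly d1 d2)
      = fromBlocks P 0 0 Q * butterfly d1 d2 * diagonal (clipEigenvalues d1 d2 α lam) := by
  rw [clipTarget_mul_mul_transpose α (mul_eq_one_comm.mp hP) (mul_eq_one_comm.mp hQ)]
  simp only [Matrix.mul_assoc]
  rw [← Matrix.mul_assoc _ (fromBlocks P 0 0 Q), transpose_mul_self_fromBlocks hP hQ,
    Matrix.one_mul, clipTarget_mul_butterfly]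

theorem submatrix_one_mul_transpose_butterfly {r d1 d2 : ℕ} (hr1 : r ≤ d1) (hr2 : r ≤ d2)
    (P : Matrix (Fin d1) (Fin d1) ℝ) (Q : Matrix (Fin d2) (Fin d2) ℝ) :
    (1 : Matrix (Fin d1 ⊕ Fin d2) (Fin d1 ⊕ Fin d2) ℝ).submatrix
        ((Fin.castLEEmb hr1).trans Function.Embedding.inl) id *
      (fromBlocks P 0 0 Q * butterfly d1 d2)ᵀ
      = (√2)⁻¹ •
        fromCols (P.submatrix id (Fin.castLE hr1))ᵀ (Q.submatrix id (Fin.castLE hr2))ᵀ := by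
  ext i (x | y) <;>
  simp [butterfly, mul_apply, Fintype.sum_sum_type, one_apply, Fin.ext_iff, Fin.sum_ite_val_eq,
    i.isLt.trans_le hr1, i.isLt.trans_le hr2] <;> rfl

theorem clipEigenvalues_inl_castLE {r d1 d2 : ℕ} (hr1 : r ≤ d1) (hr2 : r ≤ d2) (α : ℝ)
    (lam : ℕ → ℝ) (i : Fin r) :
    clipEigenvalues d1 d2 α lam (Sum.inl (Fin.castLE hr1 i)) = 1 + lam i / α := by
  simp [clipEigenvalues, i.isLt.trans_le hr2]

theorem lt_clipEigenvalues_inl_castLE {r d1 d2 : ℕ} (hr1 : r ≤ d1) (hr2 : r ≤ d2) {α : ℝ}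
    (hα : 0 < α) {lam : ℕ → ℝ} (hmono : Antitone lam) (hgap : lam r < lam (r - 1)) (i : Fin r) :
    1 + lam r / α < clipEigenvalues d1 d2 α lam (Sum.inl (Fin.castLE hr1 i)) := by
  rw [clipEigenvalues_inl_castLE hr1 hr2]
  have := hgap.trans_le (hmono (show (i : ℕ) ≤ r - 1 by omega))
  gcongr

theorem clipEigenvalues_le {r d1 d2 : ℕ} (hr1 : r ≤ d1) {α : ℝ} (hα : 0 < α) {lam : ℕ → ℝ}
    (hmono : Antitone lam) (hnn : ∀ i, 0 ≤ lam i) {a : Fin d1 ⊕ Fin d2}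
    (ha : a ∉ Finset.univ.map ((Fin.castLEEmb hr1).trans Function.Embedding.inl)) :
    clipEigenvalues d1 d2 α lam a ≤ 1 + lam r / α := by
  have hr : 0 ≤ lam r / α := div_nonneg (hnn r) hα.le
  rcases a with j | j
  · have hj : r ≤ j := by
      by_contra! hj
      exact ha (Finset.mem_map.mpr ⟨⟨j, hj⟩, Finset.mem_univ _, rfl⟩)
    have := div_le_div_of_nonneg_right (hmono hj) hα.le
    simp only [clipEigenvalues, Sum.elim_inl]
    split_ifs <;> linarith
  · have := div_nonneg (hnn j) hα.le
    simp only [clipEigenvalues, Sum.elim_inr]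
    split_ifs <;> linarith

theorem stmt_11_general (d1 d2 r : ℕ) (hr1 : r ≤ d1) (hr2 : r ≤ d2)
    (α : ℝ) (hα : 0 < α)
    (lam : ℕ → ℝ) (hmono : ∀ i j : ℕ, i ≤ j → lam j ≤ lam i) (hnn : ∀ i, 0 ≤ lam i)
    (hgap : lam r < lam (r - 1))
    (P : Matrix (Fin d1) (Fin d1) ℝ) (Q : Matrix (Fin d2) (Fin d2) ℝ)
    (hP : Pᵀ * P = 1) (hQ : Qᵀ * Q = 1)
    (S : Matrix (Fin d1) (Fin d2) ℝ)
    (hSVD : S = P * (Matrix.of fun (i : Fin d1) (j : Fin d2) => if (i : ℕ) = (j : ℕ) then lam i else 0) * Qᵀ)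
    (G1 : Matrix (Fin r) (Fin d1) ℝ) (G2 : Matrix (Fin r) (Fin d2) ℝ)
    (hmin : ∀ (G1' : Matrix (Fin r) (Fin d1) ℝ) (G2' : Matrix (Fin r) (Fin d2) ℝ),
      clipLoss α S G1 G2 ≤ clipLoss α S G1' G2') :
    ∃ V : Matrix (Fin r) (Fin r) ℝ, Vᵀ * V = 1 ∧
      G1 = (Real.sqrt 2)⁻¹ •
        (V * Matrix.diagonal (fun j : Fin r => Real.sqrt (1 + lam j / α)) *
          (P.submatrix id (Fin.castLE hr1))ᵀ) ∧
      G2 = (Real.sqrt 2)⁻¹ •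
        (V * Matrix.diagonal (fun j : Fin r => Real.sqrt (1 + lam j / α)) *
          (Q.submatrix id (Fin.castLE hr2))ᵀ) := by
  set t : Fin r ↪ Fin d1 ⊕ Fin d2 := (Fin.castLEEmb hr1).trans Function.Embedding.inl
  set O := fromBlocks P 0 0 Q * butterfly d1 d2
  have hmono' : Antitone lam := fun i j h => hmono i j h
  have hμ : 0 ≤ 1 + lam r / α := by have := div_nonneg (hnn r) hα.le; linarith
  have htop := lt_clipEigenvalues_inl_castLE hr1 hr2 hα hmono' hgap
  have hO : Oᵀ * O = 1 := transpose_mul_self_fromBlocks_mul_butterfly hP hQ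
  have hH := transpose_mul_self_eq_of_isMin t hμ htop
    (fun a ha => clipEigenvalues_le hr1 hα hmono' hnn ha)
    (frobNormSq_mul_le_of_orthogonal hO (hSVD ▸ clipTarget_mul_fromBlocks_mul_butterfly α lam hP hQ)
      (frobNormSq_le_of_clipLoss_le hα hmin))
  obtain ⟨V, hV, hGO⟩ :=
    exists_orthogonal_eq_of_transpose_mul_self_eq_diagonal t (fun i => hμ.trans_lt (htop i)) hH
  have hG : fromCols G1 G2 = V * diagonal (fun i => √(clipEigenvalues d1 d2 α lam (t i))) *
      ((1 : Matrix (Fin d1 ⊕ Fin d2) (Fin d1 ⊕ Fin d2) ℝ).submatrix t id * Oᵀ) := by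
    rw [← Matrix.mul_assoc, ← hGO, Matrix.mul_assoc, mul_eq_one_comm.mp hO, Matrix.mul_one]
  rw [submatrix_one_mul_transpose_butterfly hr1 hr2, Matrix.mul_smul, mul_fromCols] at hG
  refine ⟨V, hV, ?_, ?_⟩ <;> ext i j
  · simpa [t, clipEigenvalues_inl_castLE hr1 hr2] using congrFun (congrFun hG i) (Sum.inl j)
  · simpa [t, clipEigenvalues_inl_castLE hr1 hr2] using congrFun (congrFun hG i) (Sum.inr j)

/-- Every global minimizer of the linearized CLIP loss is a scaled truncated SVD of `Σ`.
Here `lam i` is the `(i+1)`-st singular value (so the gap `λ_r > λ_{r+1}` reads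
`lam r < lam (r-1)`). -/
theorem stmt_11 (d1 d2 r : ℕ) (hr0 : 0 < r) (hr1 : r ≤ d1) (hr2 : r ≤ d2)
    (α : ℝ) (hα : 0 < α)
    (lam : ℕ → ℝ) (hmono : ∀ i j : ℕ, i ≤ j → lam j ≤ lam i) (hnn : ∀ i, 0 ≤ lam i)
    (hgap : lam r < lam (r - 1))
    (P : Matrix (Fin d1) (Fin d1) ℝ) (Q : Matrix (Fin d2) (Fin d2) ℝ)
    (hP : Pᵀ * P = 1) (hQ : Qᵀ * Q = 1)
    (S : Matrix (Fin d1) (Fin d2) ℝ)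
    (hSVD : S = P * (Matrix.of fun (i : Fin d1) (j : Fin d2) => if (i : ℕ) = (j : ℕ) then lam i else 0) * Qᵀ)
    (G1 : Matrix (Fin r) (Fin d1) ℝ) (G2 : Matrix (Fin r) (Fin d2) ℝ)
    (hmin : ∀ (G1' : Matrix (Fin r) (Fin d1) ℝ) (G2' : Matrix (Fin r) (Fin d2) ℝ),
      clipLoss α S G1 G2 ≤ clipLoss α S G1' G2') :
    ∃ V : Matrix (Fin r) (Fin r) ℝ, Vᵀ * V = 1 ∧
      G1 = (Real.sqrt 2)⁻¹ •
        (V * Matrix.diagonal (fun j : Fin r => Real.sqrt (1 + lam j / α)) *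
          (P.submatrix id (Fin.castLE hr1))ᵀ) ∧
      G2 = (Real.sqrt 2)⁻¹ •
        (V * Matrix.diagonal (fun j : Fin r => Real.sqrt (1 + lam j / α)) *
          (Q.submatrix id (Fin.castLE hr2))ᵀ) :=
  stmt_11_general d1 d2 r hr1 hr2 α hα lam hmono hnn hgap P Q hP hQ S hSVD G1 G2 hmin
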